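/- arXiv:2209.06591 — 2 statements merged into one kernel-verified Lean document; each statement's English description precedes it below -/
import Mathlib

section
/- If G is a multigraph with girth at least 5, then the bicircular matroid B(G) has no positive double circuits. -/
open Set Matroid

namespace Paper

variable {α : Type*}

/-- A circuit of a matroid: a minimal dependent set. -/
def IsCircuit (M : Matroid α) (C : Set α) : Prop :=
  M.Dep C ∧ ∀ x ∈ C, M.Indep (C \ {x})

/-- The rank of a set: the largest cardinality of an independent subset. -/
noncomputable def rk (M : Matroid α) (X : Set α) : ℕ :=
  sSup {n : ℕ | ∃ I, I ⊆ X ∧ M.Indep I ∧ I.ncard = n}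

/-- A double circuit: a (finite) set `D` with `r(D) = |D| - 2` such that deleting any
single element does not decrease the rank. -/
def DoubleCircuit (M : Matroid α) (D : Set α) : Prop :=
  D ⊆ M.E ∧ D.Finite ∧ rk M D + 2 = D.ncard ∧ ∀ d ∈ D, rk M (D \ {d}) = rk M D

/-- `P` is the circuit partition of `D`: a partition of `D` into nonempty classes such
that the circuits of `M` contained in `D` are exactly the complements (in `D`) of the
classes. -/
def IsCircuitPartition (M : Matroid α) (D : Set α) (P : Set (Set α)) : Prop :=
  (∀ p ∈ P, p.Nonempty) ∧ (∀ p ∈ P, p ⊆ D) ∧ (∀ d ∈ D, ∃! p, p ∈ P ∧ d ∈ p) ∧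
    ∀ C, (IsCircuit M C ∧ C ⊆ D) ↔ ∃ p ∈ P, C = D \ p

/-- A positive double circuit: one whose circuit partition has strictly more singular
(size-one) classes than multiple classes. -/
def PositiveDoubleCircuit (M : Matroid α) (D : Set α) : Prop :=
  DoubleCircuit M D ∧ ∃ P, IsCircuitPartition M D P ∧
    {p ∈ P | p.ncard ≠ 1}.ncard < {p ∈ P | p.ncard = 1}.ncard

/-- A hyperplane (copoint): a maximal proper flat. -/
def IsHyperplane (M : Matroid α) (H : Set α) : Prop :=
  M.IsFlat H ∧ H ≠ M.E ∧ ∀ F, M.IsFlat F → H ⊂ F → F = M.E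

/-- A coline: a flat of codimension two. -/
def IsColine (M : Matroid α) (L : Set α) : Prop :=
  M.IsFlat L ∧ rk M L + 2 = rk M M.E

/-- `P` is the copoint partition of the coline `L`: a partition of `M.E \ L` such that
the hyperplanes containing `L` are exactly the sets `L ∪ p` for classes `p`. -/
def IsCopointPartition (M : Matroid α) (L : Set α) (P : Set (Set α)) : Prop :=
  (∀ p ∈ P, p.Nonempty) ∧ (∀ p ∈ P, p ⊆ M.E \ L) ∧ (∀ d ∈ M.E \ L, ∃! p, p ∈ P ∧ d ∈ p) ∧
    ∀ H, (IsHyperplane M H ∧ L ⊆ H) ↔ ∃ p ∈ P, H = L ∪ p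

/-- A positive coline: one whose copoint partition has strictly more singular (size-one)
classes than multiple classes. -/
def PositiveColine (M : Matroid α) (L : Set α) : Prop :=
  IsColine M L ∧ ∃ P, IsCopointPartition M L P ∧
    {p ∈ P | p.ncard ≠ 1}.ncard < {p ∈ P | p.ncard = 1}.ncard

/-- A simple matroid: no loops and no parallel pairs. -/
def SimpleM (M : Matroid α) : Prop :=
  (∀ e ∈ M.E, M.Indep {e}) ∧ ∀ e f, e ∈ M.E → f ∈ M.E → e ≠ f → M.Indep {e, f}

/-- A coloop: an element contained in every base. -/
def IsColoop (M : Matroid α) (e : α) : Prop :=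
  e ∈ M.E ∧ ∀ B, M.IsBase B → e ∈ B

open Classical in
/-- The permutation of `α` exchanging `e` and `f`. -/
noncomputable def swapMap (e f : α) (x : α) : α :=
  if x = e then f else if x = f then e else x

/-- `e` and `f` are clones in `M` if exchanging them is an automorphism of `M`. -/
def Clones (M : Matroid α) (e f : α) : Prop :=
  e ∈ M.E ∧ f ∈ M.E ∧ ∀ I, M.Indep I ↔ M.Indep (swapMap e f '' I)

/-- Contraction of a set, defined by duality with deletion. -/
noncomputable def contract (M : Matroid α) (C : Set α) : Matroid α := (M✶ ↾ (M.E \ C))✶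

/-- Deletion of a set. -/
noncomputable def delete (M : Matroid α) (D : Set α) : Matroid α := M ↾ (M.E \ D)

/-- `N` is a minor of `M`. -/
def IsMinorOf (N M : Matroid α) : Prop :=
  ∃ C D, C ⊆ M.E ∧ D ⊆ M.E ∧ Disjoint C D ∧ N = Paper.delete (contract M C) D

universe u
variable {α : Type u}



/-- A multigraph on vertex type `V` with edges labelled by elements of `E ⊆ α`. -/
structure Multigraph (V : Type*) (α : Type*) where
  E : Set α
  ends : α → Sym2 V

/-- The vertices incident with an edge set `D`. -/
def Multigraph.verts {V : Type*} (G : Multigraph V α) (D : Set α) : Set V :=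
  {v | ∃ e ∈ D, v ∈ G.ends e}

/-- The degree of `v` in the subgraph with edge set `D` (loops count twice). -/
noncomputable def Multigraph.deg {V : Type*} (G : Multigraph V α) (D : Set α) (v : V) : ℕ :=
  {e ∈ D | v ∈ G.ends e ∧ ¬ (G.ends e).IsDiag}.ncard +
    2 * {e ∈ D | G.ends e = Sym2.diag v}.ncard

/-- `M` is the bicircular matroid of `G`: an edge set is independent iff every component
of the induced subgraph contains at most one cycle; equivalently, iff every finite
subset `J` is incident with at least `|J|` vertices. -/
def IsBicircularOf {V : Type*} (G : Multigraph V α) (M : Matroid α) : Prop :=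
  M.E = G.E ∧ ∀ I, M.Indep I ↔ I ⊆ G.E ∧ ∀ J ⊆ I, J.Finite → J.ncard ≤ (G.verts J).ncard

/-- `M` is a bicircular matroid. -/
def IsBicircular (M : Matroid α) : Prop :=
  ∃ (V : Type u) (G : Multigraph V α), IsBicircularOf G M

/-- `G` has girth at least five: every nonempty set of at most four edges is incident
with strictly more vertices than it has edges (i.e. contains no cycle). -/
def GirthAtLeastFive {V : Type*} (G : Multigraph V α) : Prop :=
  ∀ J ⊆ G.E, J.Finite → J.Nonempty → J.ncard ≤ 4 → J.ncard < (G.verts J).ncard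

/-!
In `B(G)` a finite circuit `C` spans exactly `|C| - 1` vertices, since every proper subset
of it satisfies Hall's condition and `C` does not. For two classes `p ≠ q` of the circuit
partition of a double circuit `D`, inclusion–exclusion on the circuits `D \ p` and `D \ q`
then gives `|V(D)| + |V(R)| + 2 ≤ |D| + |R|` for `R = D \ (p ∪ q)`, while `|D| ≤ |V(D)| + 2`
because `r(D) = |D| - 2`. Girth at least five says that a nonempty set of at most four edges
spans more vertices than it has edges, so every circuit, and every nonempty such `R`, has
at least five edges.

Four singular classes are impossible: they force `|D| = |V(D)| + 2`, after which the
handshake lemma allows at most four vertices of degree three or more, whereas the ends of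
four singular edges are five or more such vertices. With at most three singular classes,
a positive double circuit has at most two multiple classes, and then either some circuit
`D \ p` or some nonempty `R` consists of at most three singular edges.
-/

namespace Multigraph

variable {V : Type*} (G : Multigraph V α)

/-- Its `ncard` is `Multigraph.deg G D v` when `D` has no loops. -/
def incidenceSet (D : Set α) (v : V) : Set α :=
  {e ∈ D | v ∈ G.ends e}

lemma verts_mono {X Y : Set α} (h : X ⊆ Y) : G.verts X ⊆ G.verts Y :=
  fun _ ⟨e, he, hv⟩ => ⟨e, h he, hv⟩

lemma verts_union (X Y : Set α) : G.verts (X ∪ Y) = G.verts X ∪ G.verts Y := by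
  ext v
  simp only [verts, Set.mem_union, Set.mem_ofPred_eq, or_and_right, exists_or]

lemma exists_verts_singleton_eq_pair (e : α) : ∃ a b, G.verts {e} = {a, b} := by
  induction h : G.ends e using Sym2.ind with
  | _ a b => exact ⟨a, b, by ext v; simp [verts, h, Sym2.mem_iff]⟩

lemma ncard_verts_singleton_le_two (e : α) : (G.verts {e}).ncard ≤ 2 := by
  obtain ⟨a, b, h⟩ := G.exists_verts_singleton_eq_pair e
  rw [h]
  exact (Set.ncard_insert_le a {b}).trans (by rw [Set.ncard_singleton])

lemma verts_finite {X : Set α} (hX : X.Finite) : (G.verts X).Finite := by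
  have : G.verts X = ⋃ e ∈ X, G.verts {e} := by
    ext v
    simp [verts]
  rw [this]
  refine hX.biUnion fun e _ => ?_
  obtain ⟨a, b, h⟩ := G.exists_verts_singleton_eq_pair e
  rw [h]
  exact Set.toFinite _

lemma incidenceSet_subset (D : Set α) (v : V) : G.incidenceSet D v ⊆ D :=
  fun _ h => h.1

lemma incidenceSet_mono {X Y : Set α} (h : X ⊆ Y) (v : V) :
    G.incidenceSet X v ⊆ G.incidenceSet Y v :=
  fun _ ⟨he, hv⟩ => ⟨h he, hv⟩

lemma incidenceSet_diff_singleton (D : Set α) (d : α) (v : V) :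
    G.incidenceSet (D \ {d}) v = G.incidenceSet D v \ {d} := by
  ext e
  simp only [incidenceSet, Set.mem_sdiff, Set.mem_ofPred_eq]
  tauto

lemma sum_ncard_incidenceSet {D : Set α} (hD : D.Finite) {W : Finset V}
    (hW : G.verts D ⊆ W) (hends : ∀ e ∈ D, (G.verts {e}).ncard = 2) :
    ∑ v ∈ W, (G.incidenceSet D v).ncard = 2 * D.ncard := by
  classical
  obtain ⟨F, rfl⟩ := hD.exists_finset_coe
  have hinc : ∀ v, G.incidenceSet F v = ↑(F.bipartiteBelow (fun e v => v ∈ G.ends e) v) := by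
    intro v
    ext e
    simp [incidenceSet, Finset.bipartiteBelow]
  have hends' : ∀ e ∈ F, (W.bipartiteAbove (fun e v => v ∈ G.ends e) e).card = 2 := by
    intro e he
    have hW' : ↑(W.bipartiteAbove (fun e v => v ∈ G.ends e) e) = G.verts {e} := by
      ext v
      simpa [Finset.bipartiteAbove, verts] using fun hv => hW ⟨e, he, hv⟩
    rw [← Set.ncard_coe_finset, hW', hends e he]
  simp_rw [hinc, Set.ncard_coe_finset]
  rw [← Finset.sum_card_bipartiteAbove_eq_sum_card_bipartiteBelow, Finset.sum_congr rfl hends',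
    Finset.sum_const, smul_eq_mul, mul_comm]

end Multigraph

namespace IsBicircularOf

variable {V : Type*} {G : Multigraph V α} {M : Matroid α}

lemma ncard_le_ncard_verts (hGM : IsBicircularOf G M) {I : Set α} (hI : M.Indep I)
    (hfin : I.Finite) : I.ncard ≤ (G.verts I).ncard :=
  ((hGM.2 I).1 hI).2 I subset_rfl hfin

lemma rk_le_ncard_verts (hGM : IsBicircularOf G M) {D : Set α} (hD : D.Finite) :
    rk M D ≤ (G.verts D).ncard := by
  refine csSup_le' ?_
  rintro n ⟨I, hID, hI, rfl⟩
  exact (hGM.ncard_le_ncard_verts hI (hD.subset hID)).trans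
    (Set.ncard_le_ncard (G.verts_mono hID) (G.verts_finite hD))

/-- A circuit is the only subset of itself that can violate Hall's condition. -/
lemma ncard_verts_lt_of_isCircuit (hGM : IsBicircularOf G M) {C : Set α} (hC : IsCircuit M C)
    (hfin : C.Finite) : (G.verts C).ncard < C.ncard := by
  obtain ⟨J, hJC, hJfin, hJ⟩ : ∃ J ⊆ C, J.Finite ∧ (G.verts J).ncard < J.ncard := by
    by_contra! h
    exact hC.1.not_indep ((hGM.2 C).2 ⟨hGM.1 ▸ hC.1.subset_ground, h⟩)
  rcases eq_or_ne J C with rfl | hne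
  · exact hJ
  obtain ⟨x, hxC, hxJ⟩ := Set.exists_of_ssubset (hJC.ssubset_of_ne hne)
  have hJx := (hC.2 x hxC).subset (Set.subset_sdiff_singleton hJC hxJ)
  have := hGM.ncard_le_ncard_verts hJx hJfin
  omega

lemma ncard_verts_diff_singleton_add_one_of_isCircuit (hGM : IsBicircularOf G M) {C : Set α}
    (hC : IsCircuit M C) (hfin : C.Finite) {x : α} (hx : x ∈ C) :
    (G.verts (C \ {x})).ncard + 1 = C.ncard := by
  have := hGM.ncard_le_ncard_verts (hC.2 x hx) (hfin.subset Set.sdiff_subset)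
  have := Set.ncard_le_ncard (G.verts_mono (Set.sdiff_subset (t := {x}))) (G.verts_finite hfin)
  have := Set.ncard_sdiff_singleton_add_one hx hfin
  have := hGM.ncard_verts_lt_of_isCircuit hC hfin
  omega

lemma verts_diff_singleton_of_isCircuit (hGM : IsBicircularOf G M) {C : Set α}
    (hC : IsCircuit M C) (hfin : C.Finite) {x : α} (hx : x ∈ C) :
    G.verts (C \ {x}) = G.verts C := by
  refine Set.eq_of_subset_of_ncard_le (G.verts_mono Set.sdiff_subset) ?_ (G.verts_finite hfin)
  have := hGM.ncard_verts_diff_singleton_add_one_of_isCircuit hC hfin hx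
  have := hGM.ncard_verts_lt_of_isCircuit hC hfin
  omega

lemma ncard_verts_add_one_of_isCircuit (hGM : IsBicircularOf G M) {C : Set α}
    (hC : IsCircuit M C) (hfin : C.Finite) : (G.verts C).ncard + 1 = C.ncard := by
  obtain ⟨x, hx⟩ := hC.1.nonempty
  rw [← hGM.verts_diff_singleton_of_isCircuit hC hfin hx,
    hGM.ncard_verts_diff_singleton_add_one_of_isCircuit hC hfin hx]

lemma two_le_ncard_incidenceSet_of_isCircuit (hGM : IsBicircularOf G M) {C : Set α}
    (hC : IsCircuit M C) (hfin : C.Finite) {v : V} (hv : v ∈ G.verts C) :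
    2 ≤ (G.incidenceSet C v).ncard := by
  obtain ⟨e, he, hve⟩ := hv
  obtain ⟨f, ⟨hfC, hfe⟩, hvf⟩ : v ∈ G.verts (C \ {e}) := by
    rw [hGM.verts_diff_singleton_of_isCircuit hC hfin he]
    exact ⟨e, he, hve⟩
  exact (Set.one_lt_ncard_iff (hfin.subset (G.incidenceSet_subset C v))).2
    ⟨e, f, ⟨he, hve⟩, ⟨hfC, hvf⟩, fun h => hfe h.symm⟩

lemma ncard_verts_union_add_ncard_verts_inter_add_two_le (hGM : IsBicircularOf G M)
    {C₁ C₂ : Set α} (hC₁ : IsCircuit M C₁) (hC₂ : IsCircuit M C₂) (h₁ : C₁.Finite)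
    (h₂ : C₂.Finite) :
    (G.verts (C₁ ∪ C₂)).ncard + (G.verts (C₁ ∩ C₂)).ncard + 2 ≤
      (C₁ ∪ C₂).ncard + (C₁ ∩ C₂).ncard := by
  have hV := Set.ncard_union_add_ncard_inter _ _ (G.verts_finite h₁) (G.verts_finite h₂)
  have hE := Set.ncard_union_add_ncard_inter _ _ h₁ h₂
  have hinter : (G.verts (C₁ ∩ C₂)).ncard ≤ (G.verts C₁ ∩ G.verts C₂).ncard :=
    Set.ncard_le_ncard (Set.subset_inter (G.verts_mono Set.inter_subset_left)
      (G.verts_mono Set.inter_subset_right)) ((G.verts_finite h₁).inter_of_left _)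
  have := hGM.ncard_verts_add_one_of_isCircuit hC₁ h₁
  have := hGM.ncard_verts_add_one_of_isCircuit hC₂ h₂
  rw [G.verts_union]
  omega

end IsBicircularOf

namespace GirthAtLeastFive

variable {V : Type*} {G : Multigraph V α}

lemma ncard_verts_singleton (hg : GirthAtLeastFive G) {e : α} (he : e ∈ G.E) :
    (G.verts {e}).ncard = 2 := by
  have := hg {e} (Set.singleton_subset_iff.2 he) (Set.finite_singleton e)
    (Set.singleton_nonempty e) (by rw [Set.ncard_singleton]; omega)
  have := G.ncard_verts_singleton_le_two e
  rw [Set.ncard_singleton] at *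
  omega

lemma five_le_ncard_of_isCircuit (hg : GirthAtLeastFive G) {M : Matroid α}
    (hGM : IsBicircularOf G M) {C : Set α} (hC : IsCircuit M C) (hfin : C.Finite) :
    5 ≤ C.ncard := by
  by_contra! h
  have := hg C (hGM.1 ▸ hC.1.subset_ground) hfin hC.1.nonempty (by omega)
  have := hGM.ncard_verts_add_one_of_isCircuit hC hfin
  omega

end GirthAtLeastFive

lemma ncard_sep_ncard_eq_one (P : Set (Set α)) :
    {p ∈ P | p.ncard = 1}.ncard = {d | {d} ∈ P}.ncard := by
  have : {p ∈ P | p.ncard = 1} = (fun d => ({d} : Set α)) '' {d | {d} ∈ P} := by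
    ext p
    constructor
    · rintro ⟨hp, h1⟩
      obtain ⟨d, rfl⟩ := Set.ncard_eq_one.1 h1
      exact ⟨d, hp, rfl⟩
    · rintro ⟨d, hd, rfl⟩
      exact ⟨hd, Set.ncard_singleton d⟩
  rw [this, Set.ncard_image_of_injective _ Set.singleton_injective]

lemma two_mul_card_add_card_filter_le_sum {ι : Type*} (s : Finset ι) (f : ι → ℕ)
    (h : ∀ i ∈ s, 2 ≤ f i) :
    2 * s.card + (s.filter fun i => 3 ≤ f i).card ≤ ∑ i ∈ s, f i := by
  rw [Finset.card_filter, mul_comm, ← smul_eq_mul, ← Finset.sum_const,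
    ← Finset.sum_add_distrib]
  refine Finset.sum_le_sum fun i hi => ?_
  have := h i hi
  split_ifs <;> omega

namespace IsCircuitPartition

variable {M : Matroid α} {D : Set α} {P : Set (Set α)} {p q : Set α}

lemma isCircuit_diff (hP : IsCircuitPartition M D P) (hp : p ∈ P) : IsCircuit M (D \ p) :=
  ((hP.2.2.2 _).2 ⟨p, hp, rfl⟩).1

lemma finite (hP : IsCircuitPartition M D P) (hD : D.Finite) : P.Finite :=
  hD.finite_subsets.subset fun p hp => hP.2.1 p hp

lemma singular_subset (hP : IsCircuitPartition M D P) : {d | {d} ∈ P} ⊆ D :=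
  fun _ hd => hP.2.1 _ hd rfl

lemma eq_of_mem_of_mem (hP : IsCircuitPartition M D P) (hp : p ∈ P) (hq : q ∈ P) {d : α}
    (hdp : d ∈ p) (hdq : d ∈ q) : p = q := by
  obtain ⟨r, -, hr⟩ := hP.2.2.1 d (hP.2.1 p hp hdp)
  exact (hr p ⟨hp, hdp⟩).trans (hr q ⟨hq, hdq⟩).symm

lemma disjoint (hP : IsCircuitPartition M D P) (hp : p ∈ P) (hq : q ∈ P) (hpq : p ≠ q) :
    Disjoint p q :=
  Set.disjoint_left.2 fun _ hdp hdq => hpq (hP.eq_of_mem_of_mem hp hq hdp hdq)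

lemma diff_union_diff_eq (hP : IsCircuitPartition M D P) (hp : p ∈ P) (hq : q ∈ P)
    (hpq : p ≠ q) : D \ p ∪ D \ q = D := by
  rw [← Set.sdiff_inter, (hP.disjoint hp hq hpq).inter_eq, Set.sdiff_empty]

lemma indep_diff_union (hP : IsCircuitPartition M D P) (hp : p ∈ P) (hq : q ∈ P)
    (hpq : p ≠ q) : M.Indep (D \ (p ∪ q)) := by
  obtain ⟨x, hx⟩ := hP.1 q hq
  have hxp : x ∈ D \ p := ⟨hP.2.1 q hq hx, (hP.disjoint hp hq hpq).notMem_of_mem_right hx⟩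
  refine ((hP.isCircuit_diff hp).2 x hxp).subset (Set.subset_sdiff_singleton ?_ ?_)
  · exact Set.sdiff_subset_sdiff_right Set.subset_union_left
  · exact fun h => h.2 (Or.inr hx)

lemma diff_sUnion_eq (hP : IsCircuitPartition M D P) :
    D \ ⋃₀ {p ∈ P | p.ncard ≠ 1} = {d | {d} ∈ P} := by
  ext d
  constructor
  · rintro ⟨hd, hdM⟩
    obtain ⟨p, ⟨hp, hdp⟩, -⟩ := hP.2.2.1 d hd
    have h1 : p.ncard = 1 := by
      by_contra h
      exact hdM ⟨p, ⟨hp, h⟩, hdp⟩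
    obtain ⟨a, rfl⟩ := Set.ncard_eq_one.1 h1
    rwa [Set.mem_singleton_iff.1 hdp]
  · intro hd
    refine ⟨hP.singular_subset hd, ?_⟩
    rintro ⟨p, ⟨hp, hp1⟩, hdp⟩
    exact hp1 (by rw [hP.eq_of_mem_of_mem hp hd hdp rfl, Set.ncard_singleton])

end IsCircuitPartition

section DoubleCircuit

variable {V : Type*} {G : Multigraph V α} {M : Matroid α} {D : Set α} {P : Set (Set α)}
  {p q : Set α}

lemma IsBicircularOf.ncard_verts_add_ncard_verts_diff_union_add_two_le
    (hGM : IsBicircularOf G M) (hD : D.Finite) (hP : IsCircuitPartition M D P) (hp : p ∈ P)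
    (hq : q ∈ P) (hpq : p ≠ q) :
    (G.verts D).ncard + (G.verts (D \ (p ∪ q))).ncard + 2 ≤
      D.ncard + (D \ (p ∪ q)).ncard := by
  have := hGM.ncard_verts_union_add_ncard_verts_inter_add_two_le (hP.isCircuit_diff hp)
    (hP.isCircuit_diff hq) (hD.subset Set.sdiff_subset) (hD.subset Set.sdiff_subset)
  rwa [hP.diff_union_diff_eq hp hq hpq, Set.sdiff_inter_sdiff] at this

lemma IsBicircularOf.ncard_verts_add_two_eq (hGM : IsBicircularOf G M)
    (hDC : DoubleCircuit M D) (hP : IsCircuitPartition M D P) (hp : p ∈ P) (hq : q ∈ P)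
    (hpq : p ≠ q) : (G.verts D).ncard + 2 = D.ncard := by
  have := hGM.ncard_verts_add_ncard_verts_diff_union_add_two_le hDC.2.1 hP hp hq hpq
  have := hGM.ncard_le_ncard_verts (hP.indep_diff_union hp hq hpq)
    (hDC.2.1.subset Set.sdiff_subset)
  have := hGM.rk_le_ncard_verts hDC.2.1
  have := hDC.2.2.1
  omega

/-- The circuit `D \ {d}` has `|D| - 2 = |V(D)|` vertices, so it meets every vertex of `D`. -/
lemma IsBicircularOf.two_le_ncard_incidenceSet_diff_singleton (hGM : IsBicircularOf G M)
    (hD : D.Finite) (hP : IsCircuitPartition M D P) (hVD : (G.verts D).ncard + 2 = D.ncard)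
    {d : α} (hd : {d} ∈ P) {v : V} (hv : v ∈ G.verts D) :
    2 ≤ (G.incidenceSet (D \ {d}) v).ncard := by
  have hC := hP.isCircuit_diff hd
  have hCfin := hD.subset (Set.sdiff_subset (t := {d}))
  refine hGM.two_le_ncard_incidenceSet_of_isCircuit hC hCfin ?_
  have hspan : G.verts (D \ {d}) = G.verts D := by
    refine Set.eq_of_subset_of_ncard_le (G.verts_mono Set.sdiff_subset) ?_ (G.verts_finite hD)
    have := hGM.ncard_verts_add_one_of_isCircuit hC hCfin
    have := Set.ncard_sdiff_singleton_add_one (hP.singular_subset hd) hD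
    omega
  rwa [hspan]

namespace GirthAtLeastFive

lemma five_le_ncard_diff_union (hg : GirthAtLeastFive G) (hGM : IsBicircularOf G M)
    (hDC : DoubleCircuit M D) (hP : IsCircuitPartition M D P) (hp : p ∈ P) (hq : q ∈ P)
    (hpq : p ≠ q) (hne : (D \ (p ∪ q)).Nonempty) : 5 ≤ (D \ (p ∪ q)).ncard := by
  by_contra! h
  have := hg _ (Set.sdiff_subset.trans (hGM.1 ▸ hDC.1)) (hDC.2.1.subset Set.sdiff_subset) hne
    (by omega)
  have := hGM.ncard_verts_add_ncard_verts_diff_union_add_two_le hDC.2.1 hP hp hq hpq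
  have := hGM.rk_le_ncard_verts hDC.2.1
  have := hDC.2.2.1
  omega

/-- Handshake: the degrees in `D` sum to `2|D| = 2|V(D)| + 4` and are all at least two, so
at most four vertices have degree three or more; the ends of singular edges are such. -/
lemma ncard_verts_singular_le_four (hg : GirthAtLeastFive G) (hGM : IsBicircularOf G M)
    (hDC : DoubleCircuit M D) (hP : IsCircuitPartition M D P)
    (hS : 1 < {d | {d} ∈ P}.ncard) : (G.verts {d | {d} ∈ P}).ncard ≤ 4 := by
  have hD := hDC.2.1
  obtain ⟨d₁, d₂, hd₁, hd₂, hne⟩ :=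
    (Set.one_lt_ncard_iff (hD.subset hP.singular_subset)).1 hS
  have hVD := hGM.ncard_verts_add_two_eq hDC hP hd₁ hd₂ (by simpa using hne)
  have hfin : ∀ v, (G.incidenceSet D v).Finite := fun v => hD.subset (G.incidenceSet_subset D v)
  classical
  let W := (G.verts_finite hD).toFinset
  have hsum := G.sum_ncard_incidenceSet hD (W := W) (by simp [W])
    fun e he => hg.ncard_verts_singleton (hGM.1 ▸ hDC.1 he)
  have hcount := two_mul_card_add_card_filter_le_sum W (fun v => (G.incidenceSet D v).ncard)
    fun v hv => (hGM.two_le_ncard_incidenceSet_diff_singleton hD hP hVD hd₁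
      (by simpa [W] using hv)).trans
      (Set.ncard_le_ncard (G.incidenceSet_mono Set.sdiff_subset v) (hfin v))
  have hsub :
      G.verts {d | {d} ∈ P} ⊆ ↑(W.filter fun v => 3 ≤ (G.incidenceSet D v).ncard) := by
    rintro v ⟨d, hd, hvd⟩
    have hvD : v ∈ G.verts D := ⟨d, hP.singular_subset hd, hvd⟩
    simp only [Finset.coe_filter, W, Set.Finite.mem_toFinset]
    refine ⟨hvD, ?_⟩
    have := hGM.two_le_ncard_incidenceSet_diff_singleton hD hP hVD hd hvD
    rw [G.incidenceSet_diff_singleton] at this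
    have := Set.ncard_sdiff_singleton_add_one (s := G.incidenceSet D v)
      ⟨hP.singular_subset hd, hvd⟩ (hfin v)
    omega
  have := Set.ncard_le_ncard hsub (Finset.finite_toSet _)
  have hW : W.card = (G.verts D).ncard := (Set.ncard_eq_toFinset_card _ _).symm
  rw [Set.ncard_coe_finset] at this
  omega

lemma ncard_singular_lt_four (hg : GirthAtLeastFive G) (hGM : IsBicircularOf G M)
    (hDC : DoubleCircuit M D) (hP : IsCircuitPartition M D P) : {d | {d} ∈ P}.ncard < 4 := by
  by_contra! h
  obtain ⟨J, hJS, hJ⟩ := Set.exists_subset_card_eq h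
  have hSD := hP.singular_subset
  have := hg J ((hJS.trans hSD).trans (hGM.1 ▸ hDC.1)) (hDC.2.1.subset (hJS.trans hSD))
    (Set.nonempty_of_ncard_ne_zero (by omega)) hJ.le
  have := hg.ncard_verts_singular_le_four hGM hDC hP (by omega)
  have := Set.ncard_le_ncard (G.verts_mono hJS) (G.verts_finite (hDC.2.1.subset hSD))
  omega

/-- A single multiple class `p` would leave a circuit `D \ p` of fewer than five singular
elements; two, `p` and `q`, would make the singular elements all of `D \ (p ∪ q)`. -/
lemma three_le_ncard_multiple (hg : GirthAtLeastFive G) (hGM : IsBicircularOf G M)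
    (hDC : DoubleCircuit M D) (hP : IsCircuitPartition M D P)
    (hS : {d | {d} ∈ P}.Nonempty) (hS5 : {d | {d} ∈ P}.ncard < 5) :
    3 ≤ {p ∈ P | p.ncard ≠ 1}.ncard := by
  by_contra! hm
  have hsUnion := hP.diff_sUnion_eq
  have hMfin := (hP.finite hDC.2.1).subset (Set.sep_subset P fun p => p.ncard ≠ 1)
  obtain hm | hm := Nat.lt_or_ge {p ∈ P | p.ncard ≠ 1}.ncard 2
  · obtain ⟨p, hp, hMp⟩ : ∃ p ∈ P, {p ∈ P | p.ncard ≠ 1} ⊆ {p} := by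
      obtain hM | ⟨p, hp⟩ := Set.eq_empty_or_nonempty {p ∈ P | p.ncard ≠ 1}
      · obtain ⟨d, hd⟩ := hS
        exact ⟨{d}, hd, hM ▸ Set.empty_subset _⟩
      · exact ⟨p, hp.1, fun q hq => (Set.ncard_le_one hMfin).1 (by omega) q hq p hp⟩
    have h5 := hg.five_le_ncard_of_isCircuit hGM (hP.isCircuit_diff hp)
      (hDC.2.1.subset Set.sdiff_subset)
    have hsub : D \ p ⊆ {d | {d} ∈ P} :=
      hsUnion ▸ Set.sdiff_subset_sdiff_right (by simpa using Set.sUnion_mono hMp)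
    have := Set.ncard_le_ncard hsub (hDC.2.1.subset hP.singular_subset)
    omega
  · obtain ⟨p, q, hpq, hM⟩ :=
      Set.ncard_eq_two.1 (by omega : {p ∈ P | p.ncard ≠ 1}.ncard = 2)
    have hp : p ∈ P := (hM ▸ Set.mem_insert p {q} : p ∈ {p ∈ P | p.ncard ≠ 1}).1
    have hq : q ∈ P := (hM ▸ Set.mem_insert_of_mem p rfl : q ∈ {p ∈ P | p.ncard ≠ 1}).1
    rw [hM, Set.sUnion_pair] at hsUnion
    have := hg.five_le_ncard_diff_union hGM hDC hP hp hq hpq (hsUnion ▸ hS)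
    rw [hsUnion] at this
    omega

end GirthAtLeastFive

end DoubleCircuit

/-- if `G` has girth at least `5`, then the bicircular matroid `B(G)` has
no positive double circuits. -/
theorem girth_ge_five_no_positive_double_circuit {α : Type u} {V : Type*}
    (G : Multigraph V α) (M : Matroid α) (hGM : IsBicircularOf G M)
    (hg : GirthAtLeastFive G) :
    ¬ ∃ D, PositiveDoubleCircuit M D := by
  rintro ⟨D, hDC, P, hP, hlt⟩
  rw [ncard_sep_ncard_eq_one] at hlt
  have hs := hg.ncard_singular_lt_four hGM hDC hP
  have hm := hg.three_le_ncard_multiple hGM hDC hP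
    (Set.nonempty_of_ncard_ne_zero (by omega)) (by omega)
  omega

end Paper
end

section
/- If e and f are clones in a cosimple matroid M, then M contains circuits C_1 and C_2 with |C_1 △ C_2| = 2; consequently M has a double circuit with at least two singular classes. -/
open Set Matroid

namespace Paper

variable {α : Type*}

/-!
Cosimplicity makes `{e, f}` coindependent, so `E - {e, f}` is spanning and `e` lies in a circuit
`C` avoiding `f`. Swapping the clones carries `C` to the circuit `C - e + f`, and the two differ
exactly in `{e, f}`. Their union `D = C + f` is covered by circuits and has rank `|C| - 1`, so it is
a double circuit. In a double circuit each `D - d` has nullity one and so contains exactly one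
circuit; hence the complements of the circuits inside `D` form its circuit partition, in which
`D - C = {f}` and `D - (C - e + f) = {e}` are singular classes.
-/

variable {M : Matroid α} {C D I X : Set α} {e f d : α}

lemma isCircuit_iff_isCircuit : IsCircuit M C ↔ M.IsCircuit C :=
  isCircuit_iff_dep_forall_sdiff_singleton_indep.symm

lemma rk_eq_ncard_of_isBasis (hI : M.IsBasis I X) (hIfin : I.Finite) : rk M X = I.ncard := by
  refine IsGreatest.csSup_eq ⟨⟨I, hI.subset, hI.indep, rfl⟩, ?_⟩
  rintro n ⟨J, hJX, hJ, rfl⟩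
  have hJI : J.encard ≤ I.encard := hI.encard_eq_eRk ▸ hJ.encard_le_eRk_of_subset hJX
  exact ENat.toNat_le_toNat hJI hIfin.encard_lt_top.ne

lemma rk_sdiff_singleton_eq (hX : X.Finite) (hXE : X ⊆ M.E) (hd : d ∈ M.closure (X \ {d})) :
    rk M (X \ {d}) = rk M X := by
  obtain ⟨I, hI⟩ := M.exists_isBasis (X \ {d}) (sdiff_subset.trans hXE)
  have hIX : M.IsBasis I X := hI.isBasis_of_closure_eq_closure (hI.subset.trans sdiff_subset)
    (closure_sdiff_singleton_eq_closure hd)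
  have hIfin : I.Finite := hX.subset hIX.subset
  rw [rk_eq_ncard_of_isBasis hI hIfin, rk_eq_ncard_of_isBasis hIX hIfin]

lemma existsUnique_isCircuit_subset_of_rk_add_one_eq (hX : X.Finite) (hXE : X ⊆ M.E)
    (hrk : rk M X + 1 = X.ncard) : ∃! C, M.IsCircuit C ∧ C ⊆ X := by
  obtain ⟨I, hI⟩ := M.exists_isBasis X hXE
  have hIfin : I.Finite := hX.subset hI.subset
  obtain ⟨x, hx⟩ : ∃ x, X \ I = {x} := by
    rw [← ncard_eq_one, ncard_sdiff hI.subset hIfin, ← rk_eq_ncard_of_isBasis hI hIfin]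
    omega
  have hxI : x ∉ I := (hx ▸ mem_singleton x : x ∈ X \ I).2
  have hXx : X = insert x I := by rw [← union_singleton, ← hx, union_sdiff_cancel hI.subset]
  refine ⟨M.fundCircuit x I, ⟨hI.indep.fundCircuit_isCircuit ?_ hxI, ?_⟩, ?_⟩
  · exact hI.subset_closure (hXx ▸ mem_insert x I)
  · exact hXx ▸ fundCircuit_subset_insert M x I
  · rintro C ⟨hC, hCX⟩
    exact hC.eq_fundCircuit_of_subset hI.indep (hXx ▸ hCX)

lemma swapMap_injective (e f : α) : Function.Injective (swapMap e f) := by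
  classical
  have : swapMap e f = Equiv.swap e f := by
    ext x; simp only [swapMap, Equiv.swap_apply_def]
  exact this ▸ (Equiv.swap e f).injective

lemma image_swapMap_of_mem_of_notMem (he : e ∈ C) (hf : f ∉ C) :
    swapMap e f '' C = insert f (C \ {e}) := by
  have hef : e ≠ f := ne_of_mem_of_not_mem he hf
  ext y
  simp only [mem_image, mem_insert_iff, mem_sdiff, mem_singleton_iff, swapMap]
  constructor
  · rintro ⟨x, hx, rfl⟩
    split_ifs with hxe hxf <;> simp_all
  · rintro (rfl | ⟨hy, hye⟩)
    · exact ⟨e, he, by simp⟩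
    · exact ⟨y, hy, by simp [hye, ne_of_mem_of_not_mem hy hf]⟩

lemma Clones.mapsTo_swapMap (h : Clones M e f) : MapsTo (swapMap e f) M.E M.E := by
  intro x hx
  unfold swapMap
  split_ifs
  exacts [h.2.1, h.1, hx]

lemma Clones.isCircuit_image (h : Clones M e f) (hC : M.IsCircuit C) :
    M.IsCircuit (swapMap e f '' C) := by
  rw [isCircuit_iff_dep_forall_sdiff_singleton_indep]
  refine ⟨⟨fun hi => hC.not_indep ((h.2.2 C).2 hi), ?_⟩, ?_⟩
  · exact h.mapsTo_swapMap.image_subset.trans' (image_mono hC.subset_ground)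
  · rintro _ ⟨x, hx, rfl⟩
    rw [← image_singleton, ← image_sdiff (swapMap_injective e f)]
    exact (h.2.2 _).1 (hC.sdiff_singleton_indep hx)

lemma Clones.isCircuit_insert_sdiff (h : Clones M e f) (hC : M.IsCircuit C) (he : e ∈ C)
    (hf : f ∉ C) : M.IsCircuit (insert f (C \ {e})) :=
  image_swapMap_of_mem_of_notMem he hf ▸ h.isCircuit_image hC

lemma Coindep.exists_isCircuit_inter_eq_singleton (hX : M.Coindep X) (he : e ∈ X) :
    ∃ C, M.IsCircuit C ∧ C ∩ X = {e} := by
  have hecl : e ∈ M.closure (M.E \ X) := by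
    rw [hX.compl_spanning.closure_eq]; exact hX.subset_ground he
  obtain ⟨C, hCs, hC, heC⟩ := exists_isCircuit_of_mem_closure hecl (fun h => h.2 he)
  refine ⟨C, hC, subset_antisymm (fun x ⟨hxC, hxX⟩ => ?_) (by simpa using ⟨heC, he⟩)⟩
  rcases hCs hxC with rfl | hx
  exacts [rfl, (hx.2 hxX).elim]

lemma doubleCircuit_insert_of_isCircuit (hC : M.IsCircuit C)
    (hC' : M.IsCircuit (insert f (C \ {e}))) (he : e ∈ C) (hf : f ∉ C) (hCfin : C.Finite) :
    DoubleCircuit M (insert f C) := by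
  have hDE : insert f C ⊆ M.E :=
    insert_subset (hC'.subset_ground (mem_insert f _)) hC.subset_ground
  have hfcl : f ∈ M.closure (C \ {e}) := by
    simpa [insert_sdiff_self_of_notMem (notMem_subset sdiff_subset hf)]
      using hC'.mem_closure_sdiff_singleton_of_mem (mem_insert f _)
  have hbasis : M.IsBasis (C \ {e}) (insert f C) :=
    (hC.sdiff_singleton_indep he).isBasis_of_subset_of_subset_closure
      (sdiff_subset.trans (subset_insert f C))
      (insert_subset hfcl (hC.sdiff_singleton_isBasis he).subset_closure)
  refine ⟨hDE, hCfin.insert f, ?_, fun d hd => rk_sdiff_singleton_eq (hCfin.insert f) hDE ?_⟩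
  · rw [rk_eq_ncard_of_isBasis hbasis hCfin.sdiff, ncard_sdiff_singleton_of_mem he,
      ncard_insert_of_notMem hf hCfin]
    have := (ncard_pos hCfin).2 hC.nonempty
    omega
  obtain rfl | hdC := hd
  · exact M.closure_subset_closure (sdiff_subset_sdiff_left (insert_subset_insert sdiff_subset))
      (hC'.mem_closure_sdiff_singleton_of_mem (mem_insert d _))
  · exact M.closure_subset_closure (sdiff_subset_sdiff_left (subset_insert f C))
      (hC.mem_closure_sdiff_singleton_of_mem hdC)

lemma DoubleCircuit.existsUnique_isCircuit_subset_sdiff (hD : DoubleCircuit M D) (hd : d ∈ D) :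
    ∃! C, M.IsCircuit C ∧ C ⊆ D \ {d} := by
  obtain ⟨hDE, hDfin, hrk, hrkd⟩ := hD
  refine existsUnique_isCircuit_subset_of_rk_add_one_eq hDfin.sdiff (sdiff_subset.trans hDE) ?_
  rw [hrkd d hd, ncard_sdiff_singleton_of_mem hd]
  omega

lemma DoubleCircuit.isCircuitPartition (hD : DoubleCircuit M D) :
    IsCircuitPartition M D ((D \ ·) '' {C | M.IsCircuit C ∧ C ⊆ D}) := by
  refine ⟨?_, ?_, fun d hd => ?_, fun C => ?_⟩
  · rintro _ ⟨C, ⟨hC, -⟩, rfl⟩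
    rw [nonempty_iff_ne_empty, Ne, sdiff_eq_empty]
    intro hDC
    obtain ⟨d, hd⟩ : D.Nonempty := nonempty_of_ncard_ne_zero (by have := hD.2.2.1; omega)
    obtain ⟨C', ⟨hC', hC'D⟩, -⟩ := hD.existsUnique_isCircuit_subset_sdiff hd
    exact hC'.not_indep ((hC.sdiff_singleton_indep (hDC hd)).subset
      (hC'D.trans (sdiff_subset_sdiff_left hDC)))
  · rintro _ ⟨C, -, rfl⟩
    exact sdiff_subset
  · obtain ⟨C, ⟨hC, hCd⟩, huniq⟩ := hD.existsUnique_isCircuit_subset_sdiff hd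
    refine ⟨D \ C, ⟨⟨C, ⟨hC, hCd.trans sdiff_subset⟩, rfl⟩, hd, fun h => (hCd h).2 rfl⟩,
      ?_⟩
    rintro _ ⟨⟨C', ⟨hC', hC'D⟩, rfl⟩, hdC'⟩
    rw [huniq C' ⟨hC', subset_sdiff_singleton hC'D hdC'.2⟩]
  · rw [isCircuit_iff_isCircuit]
    constructor
    · intro h
      exact ⟨D \ C, ⟨C, h, rfl⟩, (sdiff_sdiff_cancel_left h.2).symm⟩
    · rintro ⟨_, ⟨C', h, rfl⟩, rfl⟩
      rwa [sdiff_sdiff_cancel_left h.2]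

lemma symmDiff_insert_sdiff_singleton (he : e ∈ C) (hf : f ∉ C) :
    symmDiff C (insert f (C \ {e})) = {e, f} := by
  ext x
  by_cases hxe : x = e <;> by_cases hxf : x = f <;> aesop (add simp symmDiff_def)

lemma insert_sdiff_insert_sdiff_singleton (he : e ∈ C) (hf : f ∉ C) :
    insert f C \ insert f (C \ {e}) = {e} := by
  ext x
  by_cases hxe : x = e <;> by_cases hxf : x = f <;> aesop

lemma two_le_ncard_sep_ncard_eq_one {P : Set (Set α)} (hP : P.Finite) (hef : e ≠ f)
    (he : {e} ∈ P) (hf : {f} ∈ P) : 2 ≤ {p ∈ P | p.ncard = 1}.ncard :=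
  calc 2 = ({{e}, {f}} : Set (Set α)).ncard := (ncard_pair (by simpa)).symm
    _ ≤ _ := ncard_le_ncard (by rintro _ (rfl | rfl) <;> simp [he, hf]) (hP.sep _)

/-- if `e` and `f` are clones in a cosimple matroid `M`, then `M` has two
circuits with symmetric difference of size two, and hence a double circuit with at
least two singular classes. -/
theorem clones_in_cosimple_give_close_circuits {α : Type*} (M : Matroid α) [M.Finite]
    (hcos : SimpleM M✶) (e f : α) (hef : e ≠ f) (hclones : Clones M e f) :
    (∃ C₁ C₂, IsCircuit M C₁ ∧ IsCircuit M C₂ ∧ (symmDiff C₁ C₂).ncard = 2) ∧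
      ∃ D P, DoubleCircuit M D ∧ IsCircuitPartition M D P ∧
        2 ≤ {p ∈ P | p.ncard = 1}.ncard := by
  obtain ⟨C, hC, hCef⟩ := Coindep.exists_isCircuit_inter_eq_singleton
    (hcos.2 e f hclones.1 hclones.2.1 hef) (mem_insert e {f})
  have he : e ∈ C := (hCef.symm ▸ mem_singleton e : e ∈ C ∩ {e, f}).1
  have hf : f ∉ C := fun hf => hef (hCef ▸ ⟨hf, by simp⟩ : f ∈ ({e} : Set α)).symm
  have hC' := hclones.isCircuit_insert_sdiff hC he hf
  have hD := doubleCircuit_insert_of_isCircuit hC hC' he hf hC.finite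
  refine ⟨⟨C, _, isCircuit_iff_isCircuit.2 hC, isCircuit_iff_isCircuit.2 hC', ?_⟩,
    _, _, hD, hD.isCircuitPartition, two_le_ncard_sep_ncard_eq_one ?_ hef ?_ ?_⟩
  · rw [symmDiff_insert_sdiff_singleton he hf, ncard_pair hef]
  · exact (hD.2.1.finite_subsets.subset fun _ h => h.2).image _
  · exact ⟨_, ⟨hC', insert_subset_insert sdiff_subset⟩,
      insert_sdiff_insert_sdiff_singleton he hf⟩
  · exact ⟨C, ⟨hC, subset_insert f C⟩, insert_sdiff_eq_singleton hf⟩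

end Paper
end
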